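/- arXiv:2203.02902 — 8 statements merged into one kernel-verified Lean document; each statement's English description precedes it below -/
import Mathlib

section
/- (Determinacy + Matched Label + Covariate Shift ⇒ Domain Invariance.) Let X and Y be finite types, f : X → Y a function, and let p_S and p_T be probability mass functions on X × Y (the source and target joint distributions) such that p_S(x,y) = 0 and p_T(x,y) = 0 whenever y ≠ f(x) (determinacy), the label marginals match (for all y, Σ_x p_S(x,y) = Σ_x p_T(x,y)), and covariate shift holds (for every x in the support of both X-marginals and every y, p_S(x,y)/p_S_X(x) = p_T(x,y)/p_T_X(x)). Then, taking the feature transform g = f, the joint distribution of (f(X), Y) is the same in both domains: for all z ∈ Y and y ∈ Y, Σ_{x : f(x) = z} p_S(x,y) = Σ_{x : f(x) = z} p_T(x,y); moreover, in each domain, for every x in the support of that domain's X-marginal and every y, the conditional probability of Y = y given X = x equals the conditional probability of Y = y given f(X) = f(x). -/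
open Finset

private lemma marg_eq {X Y : Type*} [Fintype Y] [DecidableEq Y]
    (f : X → Y) (p : X × Y → ℝ) (hdet : ∀ x y, y ≠ f x → p (x, y) = 0) (x : X) :
    ∑ y' : Y, p (x, y') = p (x, f x) := by
  refine Finset.sum_eq_single _ (fun y _ hy => hdet x y hy) (by simp)

private lemma joint_half {X Y : Type*} [Fintype X] [Fintype Y] [DecidableEq Y]
    (f : X → Y) (p : X × Y → ℝ) (hnn : ∀ xy, 0 ≤ p xy)
    (hdet : ∀ x y, y ≠ f x → p (x, y) = 0) :
    ∀ x : X, 0 < ∑ y' : Y, p (x, y') → ∀ y : Y,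
      p (x, y) / (∑ y' : Y, p (x, y')) =
        (∑ x' ∈ univ.filter (fun x' => f x' = f x), p (x', y)) /
          (∑ x' ∈ univ.filter (fun x' => f x' = f x), ∑ y' : Y, p (x', y')) := by
  intro x hx y
  rw [marg_eq f p hdet] at hx
  by_cases hy : y = f x
  · subst hy
    have hden : ∑ x' ∈ univ.filter (fun x' => f x' = f x), ∑ y' : Y, p (x', y')
        = ∑ x' ∈ univ.filter (fun x' => f x' = f x), p (x', f x) := by
      refine Finset.sum_congr rfl fun x' hx' => ?_
      rw [marg_eq f p hdet, (mem_filter.mp hx').2]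
    have hpos : 0 < ∑ x' ∈ univ.filter (fun x' => f x' = f x), p (x', f x) := by
      refine Finset.sum_pos' (fun x' _ => hnn _) ⟨x, by simp, hx⟩
    rw [marg_eq f p hdet, hden, div_self hx.ne', div_self hpos.ne']
  · rw [hdet x y hy, zero_div, Finset.sum_eq_zero, zero_div]
    intro x' hx'
    exact hdet x' y (by rw [(mem_filter.mp hx').2]; exact hy)

/-- Determinacy + matched label marginals + covariate shift imply domain invariance,
witnessed by the feature transform `g = f`: the joint distribution of `(f(X), Y)` is the
same in both domains, and in each domain `f` preserves all label information. -/
theorem det_matchedLabel_CS_implies_DI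
    {X Y : Type*} [Fintype X] [Fintype Y] [DecidableEq Y]
    (f : X → Y) (pS pT : X × Y → ℝ)
    (hSnn : ∀ xy, 0 ≤ pS xy) (hSsum : ∑ xy : X × Y, pS xy = 1)
    (hTnn : ∀ xy, 0 ≤ pT xy) (hTsum : ∑ xy : X × Y, pT xy = 1)
    (hSdet : ∀ x y, y ≠ f x → pS (x, y) = 0)
    (hTdet : ∀ x y, y ≠ f x → pT (x, y) = 0)
    (hlabel : ∀ y : Y, ∑ x : X, pS (x, y) = ∑ x : X, pT (x, y))
    (hCS : ∀ x : X, 0 < ∑ y' : Y, pS (x, y') → 0 < ∑ y' : Y, pT (x, y') →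
      ∀ y : Y, pS (x, y) / (∑ y' : Y, pS (x, y')) = pT (x, y) / (∑ y' : Y, pT (x, y'))) :
    (∀ z y : Y,
      ∑ x ∈ univ.filter (fun x => f x = z), pS (x, y) =
        ∑ x ∈ univ.filter (fun x => f x = z), pT (x, y)) ∧
    (∀ x : X, 0 < ∑ y' : Y, pS (x, y') → ∀ y : Y,
      pS (x, y) / (∑ y' : Y, pS (x, y')) =
        (∑ x' ∈ univ.filter (fun x' => f x' = f x), pS (x', y)) /
          (∑ x' ∈ univ.filter (fun x' => f x' = f x), ∑ y' : Y, pS (x', y'))) ∧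
    (∀ x : X, 0 < ∑ y' : Y, pT (x, y') → ∀ y : Y,
      pT (x, y) / (∑ y' : Y, pT (x, y')) =
        (∑ x' ∈ univ.filter (fun x' => f x' = f x), pT (x', y)) /
          (∑ x' ∈ univ.filter (fun x' => f x' = f x), ∑ y' : Y, pT (x', y'))) := by
  refine ⟨fun z y => ?_, joint_half f pS hSnn hSdet, joint_half f pT hTnn hTdet⟩
  by_cases hy : y = z
  · subst hy
    have key : ∀ (p : X × Y → ℝ), (∀ x y', y' ≠ f x → p (x, y') = 0) →
        ∑ x ∈ univ.filter (fun x => f x = y), p (x, y) = ∑ x : X, p (x, y) := by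
      intro p hdet
      refine Finset.sum_subset (Finset.subset_univ _) fun x _ hx => ?_
      exact hdet x y fun h => hx (by simpa [h])
    rw [key pS hSdet, key pT hTdet, hlabel]
  · rw [Finset.sum_eq_zero, Finset.sum_eq_zero] <;>
      · intro x hx
        have := (mem_filter.mp hx).2
        first
          | exact hTdet x y (by rw [this]; exact hy)
          | exact hSdet x y (by rw [this]; exact hy)
end

section
/- (Domain Invariance ⇒ Covariate Shift.) Let X, Y, Z be finite types, g : X → Z a function, and let p_S and p_T be probability mass functions on X × Y. Suppose (i) in each domain D ∈ {S, T}, for every x with p_D_X(x) > 0 and every y, the conditional probability of Y = y given X = x under p_D equals the conditional probability of Y = y given g(X) = g(x) under p_D; and (ii) the joint distribution of (g(X), Y) is the same in both domains: for all z ∈ Z and y ∈ Y, Σ_{x : g(x) = z} p_S(x,y) = Σ_{x : g(x) = z} p_T(x,y). Then covariate shift holds: for every x with both p_S_X(x) > 0 and p_T_X(x) > 0, and every y, p_S(x,y)/p_S_X(x) = p_T(x,y)/p_T_X(x). -/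
open Finset

/-- Domain invariance implies covariate shift: if a feature transform `g` preserves all
label information in each domain and the joint distribution of `(g(X), Y)` is the same in
both domains, then the conditional distribution of `Y` given `X` is the same in both
domains. -/
theorem DI_implies_CS
    {X Y Z : Type*} [Fintype X] [Fintype Y] [Fintype Z] [DecidableEq Z]
    (g : X → Z) (pS pT : X × Y → ℝ)
    (hSnn : ∀ xy, 0 ≤ pS xy) (hSsum : ∑ xy : X × Y, pS xy = 1)
    (hTnn : ∀ xy, 0 ≤ pT xy) (hTsum : ∑ xy : X × Y, pT xy = 1)
    (hSinfo : ∀ x : X, 0 < ∑ y' : Y, pS (x, y') → ∀ y : Y,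
      pS (x, y) / (∑ y' : Y, pS (x, y')) =
        (∑ x' ∈ univ.filter (fun x' => g x' = g x), pS (x', y)) /
          (∑ x' ∈ univ.filter (fun x' => g x' = g x), ∑ y' : Y, pS (x', y')))
    (hTinfo : ∀ x : X, 0 < ∑ y' : Y, pT (x, y') → ∀ y : Y,
      pT (x, y) / (∑ y' : Y, pT (x, y')) =
        (∑ x' ∈ univ.filter (fun x' => g x' = g x), pT (x', y)) /
          (∑ x' ∈ univ.filter (fun x' => g x' = g x), ∑ y' : Y, pT (x', y')))
    (hjoint : ∀ (z : Z) (y : Y),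
      ∑ x ∈ univ.filter (fun x => g x = z), pS (x, y) =
        ∑ x ∈ univ.filter (fun x => g x = z), pT (x, y)) :
    ∀ x : X, 0 < ∑ y' : Y, pS (x, y') → 0 < ∑ y' : Y, pT (x, y') → ∀ y : Y,
      pS (x, y) / (∑ y' : Y, pS (x, y')) = pT (x, y) / (∑ y' : Y, pT (x, y')) := by
  intro x hS hT y
  rw [hSinfo x hS y, hTinfo x hT y, hjoint (g x) y]
  congr 1
  rw [Finset.sum_comm]
  rw [Finset.sum_comm (s := univ.filter (fun x' => g x' = g x))]
  exact Finset.sum_congr rfl (fun y' _ => hjoint (g x) y')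
end

section
/- (Importance factorization under Generalized Label Shift.) Let X, Y, Z be finite types, g : X → Z a function, and let p_S and p_T be probability mass functions on X × Y. Suppose (i) in each domain D ∈ {S, T}, for every x with p_D_X(x) > 0 and every y, the conditional probability of Y = y given X = x under p_D equals the conditional probability of Y = y given g(X) = g(x) under p_D; and (ii) for every y with Σ_x p_S(x,y) > 0 and Σ_x p_T(x,y) > 0 and every z ∈ Z, (Σ_{x : g(x) = z} p_S(x,y)) / (Σ_x p_S(x,y)) = (Σ_{x : g(x) = z} p_T(x,y)) / (Σ_x p_T(x,y)). Then for every (x,y) with p_S(x,y) > 0 and p_T(x,y) > 0, the joint importance factorizes as p_T(x,y)/p_S(x,y) = [p_T(X = x | g(X) = g(x)) / p_S(X = x | g(X) = g(x))] · [(Σ_{x'} p_T(x',y)) / (Σ_{x'} p_S(x',y))], where p_D(X = x | g(X) = z) = p_D_X(x) / (Σ_{x' : g(x') = z} p_D_X(x')). -/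
open Finset

/-- Importance factorization under generalized label shift: if the feature transform `g`
preserves all label information in each domain and the conditional distribution of `g(X)`
given `Y` is the same in both domains, then the joint importance weight factorizes as
`p_T(x,y)/p_S(x,y) = [p_T(X=x|g(X)=g(x)) / p_S(X=x|g(X)=g(x))] · [p_T(y)/p_S(y)]`. -/
theorem GLS_importance_factorization
    {X Y Z : Type*} [Fintype X] [Fintype Y] [Fintype Z] [DecidableEq Z]
    (g : X → Z) (pS pT : X × Y → ℝ)
    (hSnn : ∀ xy, 0 ≤ pS xy) (hSsum : ∑ xy : X × Y, pS xy = 1)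
    (hTnn : ∀ xy, 0 ≤ pT xy) (hTsum : ∑ xy : X × Y, pT xy = 1)
    (hSinfo : ∀ x : X, 0 < ∑ y' : Y, pS (x, y') → ∀ y : Y,
      pS (x, y) / (∑ y' : Y, pS (x, y')) =
        (∑ x' ∈ univ.filter (fun x' => g x' = g x), pS (x', y)) /
          (∑ x' ∈ univ.filter (fun x' => g x' = g x), ∑ y' : Y, pS (x', y')))
    (hTinfo : ∀ x : X, 0 < ∑ y' : Y, pT (x, y') → ∀ y : Y,
      pT (x, y) / (∑ y' : Y, pT (x, y')) =
        (∑ x' ∈ univ.filter (fun x' => g x' = g x), pT (x', y)) /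
          (∑ x' ∈ univ.filter (fun x' => g x' = g x), ∑ y' : Y, pT (x', y')))
    (hGLS : ∀ y : Y, 0 < ∑ x : X, pS (x, y) → 0 < ∑ x : X, pT (x, y) → ∀ z : Z,
      (∑ x ∈ univ.filter (fun x => g x = z), pS (x, y)) / (∑ x : X, pS (x, y)) =
        (∑ x ∈ univ.filter (fun x => g x = z), pT (x, y)) / (∑ x : X, pT (x, y))) :
    ∀ (x : X) (y : Y), 0 < pS (x, y) → 0 < pT (x, y) →
      pT (x, y) / pS (x, y) =
        ((∑ y' : Y, pT (x, y')) /
            (∑ x' ∈ univ.filter (fun x' => g x' = g x), ∑ y' : Y, pT (x', y'))) /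
          ((∑ y' : Y, pS (x, y')) /
            (∑ x' ∈ univ.filter (fun x' => g x' = g x), ∑ y' : Y, pS (x', y'))) *
        ((∑ x' : X, pT (x', y)) / (∑ x' : X, pS (x', y))) := by

  intro x y hSxy hTxy
  have hxmem : x ∈ univ.filter (fun x' => g x' = g x) := by simp
  have hApos : 0 < ∑ y' : Y, pS (x, y') :=
    lt_of_lt_of_le hSxy (Finset.single_le_sum (fun i _ => hSnn _) (mem_univ y))
  have hA'pos : 0 < ∑ y' : Y, pT (x, y') :=
    lt_of_lt_of_le hTxy (Finset.single_le_sum (fun i _ => hTnn _) (mem_univ y))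
  have hCpos : 0 < ∑ x' ∈ univ.filter (fun x' => g x' = g x), ∑ y' : Y, pS (x', y') :=
    lt_of_lt_of_le hApos (Finset.single_le_sum (fun i _ => Finset.sum_nonneg fun _ _ => hSnn _) hxmem)
  have hC'pos : 0 < ∑ x' ∈ univ.filter (fun x' => g x' = g x), ∑ y' : Y, pT (x', y') :=
    lt_of_lt_of_le hA'pos (Finset.single_le_sum (fun i _ => Finset.sum_nonneg fun _ _ => hTnn _) hxmem)
  have hMpos : 0 < ∑ x' : X, pS (x', y) :=
    lt_of_lt_of_le hSxy (Finset.single_le_sum (f := fun x' => pS (x', y)) (fun i _ => hSnn _) (mem_univ x))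
  have hM'pos : 0 < ∑ x' : X, pT (x', y) :=
    lt_of_lt_of_le hTxy (Finset.single_le_sum (f := fun x' => pT (x', y)) (fun i _ => hTnn _) (mem_univ x))
  have hBpos : 0 < ∑ x' ∈ univ.filter (fun x' => g x' = g x), pS (x', y) :=
    lt_of_lt_of_le hSxy (Finset.single_le_sum (f := fun x' => pS (x', y)) (fun i _ => hSnn _) hxmem)
  have hB'pos : 0 < ∑ x' ∈ univ.filter (fun x' => g x' = g x), pT (x', y) :=
    lt_of_lt_of_le hTxy (Finset.single_le_sum (f := fun x' => pT (x', y)) (fun i _ => hTnn _) hxmem)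
  have h1 := hSinfo x hApos y
  have h2 := hTinfo x hA'pos y
  have h3 := hGLS y hMpos hM'pos (g x)
  rw [div_eq_div_iff hApos.ne' hCpos.ne'] at h1
  rw [div_eq_div_iff hA'pos.ne' hC'pos.ne'] at h2
  rw [div_eq_div_iff hMpos.ne' hM'pos.ne'] at h3
  field_simp
  linear_combination (∑ y' : Y, pS (x, y')) * (∑ x' : X, pS (x', y)) * h2 -
    (∑ y' : Y, pT (x, y')) * (∑ y' : Y, pS (x, y')) * h3 -
    (∑ y' : Y, pT (x, y')) * (∑ x' : X, pT (x', y)) * h1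
end

section
/- (Lemma 1, minimizer part.) Let X be a finite type and let P and Q be probability mass functions on X such that P(x) > 0 for every x (P has full support, hence a larger support than Q). Then for every function w : X → ℝ with w(x) > 0 for all x, Σ_x P(x)·log(1 + w(x)) + Σ_x Q(x)·log(1 + 1/w(x)) ≥ Σ_x [ P(x)·log((P(x) + Q(x))/P(x)) + Q(x)·log((P(x) + Q(x))/Q(x)) ], where the convention Q(x)·log((P(x)+Q(x))/Q(x)) = 0 is used when Q(x) = 0. Moreover, if Q also has full support, the bound is attained exactly by w(x) = Q(x)/P(x), i.e., equality holds if and only if w(x) = Q(x)/P(x) for all x. -/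
open Real

private lemma ptwise_le (p q w : ℝ) (hp : 0 < p) (hq : 0 ≤ q) (hw : 0 < w) :
    p * Real.log ((p + q) / p) + q * Real.log ((p + q) / q)
      ≤ p * Real.log (1 + w) + q * Real.log (1 + 1 / w) := by
  have hw1 : (0:ℝ) < 1 + w := by linarith
  rcases eq_or_lt_of_le hq with h0 | hq
  · rw [← h0]
    simp only [add_zero, zero_mul, div_self hp.ne', Real.log_one, mul_zero]
    exact mul_nonneg hp.le (Real.log_nonneg (by linarith))
  · set a := (p + q) / (p * (1 + w)) with ha_def
    set b := ((p + q) * w) / (q * (1 + w)) with hb_def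
    have ha : 0 < a := by positivity
    have hb : 0 < b := by positivity
    have h1 := Real.log_le_sub_one_of_pos ha
    have h2 := Real.log_le_sub_one_of_pos hb
    have L1 : Real.log ((p + q) / p) = Real.log (p + q) - Real.log p :=
      Real.log_div (by positivity) hp.ne'
    have L2 : Real.log ((p + q) / q) = Real.log (p + q) - Real.log q :=
      Real.log_div (by positivity) hq.ne'
    have L3 : Real.log (1 + 1 / w) = Real.log (1 + w) - Real.log w := by
      rw [show 1 + 1 / w = (1 + w) / w by field_simp; ring]
      exact Real.log_div hw1.ne' hw.ne'
    have L4 : Real.log a = Real.log (p + q) - Real.log p - Real.log (1 + w) := by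
      rw [ha_def, Real.log_div (by positivity) (by positivity),
        Real.log_mul hp.ne' hw1.ne']
      ring
    have L5 : Real.log b = Real.log (p + q) + Real.log w - Real.log q - Real.log (1 + w) := by
      rw [hb_def, Real.log_div (by positivity) (by positivity),
        Real.log_mul (by positivity) hw.ne', Real.log_mul hq.ne' hw1.ne']
      ring
    have hzero : p * (a - 1) + q * (b - 1) = 0 := by
      rw [ha_def, hb_def]; field_simp; ring
    have hA := mul_le_mul_of_nonneg_left h1 hp.le
    have hB := mul_le_mul_of_nonneg_left h2 hq.le
    rw [L4] at hA
    rw [L5] at hB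
    rw [L1, L2, L3]
    nlinarith [hA, hB, hzero]

private lemma ptwise_lt (p q w : ℝ) (hp : 0 < p) (hq : 0 < q) (hw : 0 < w)
    (hne : w ≠ q / p) :
    p * Real.log ((p + q) / p) + q * Real.log ((p + q) / q)
      < p * Real.log (1 + w) + q * Real.log (1 + 1 / w) := by
  have hw1 : (0:ℝ) < 1 + w := by linarith
  set a := (p + q) / (p * (1 + w)) with ha_def
  set b := ((p + q) * w) / (q * (1 + w)) with hb_def
  have ha : 0 < a := by positivity
  have hb : 0 < b := by positivity
  have ha1 : a ≠ 1 := by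
    intro h
    apply hne
    rw [ha_def, div_eq_one_iff_eq (by positivity)] at h
    field_simp
    nlinarith [h]
  have h1 := Real.log_lt_sub_one_of_pos ha ha1
  have h2 := Real.log_le_sub_one_of_pos hb
  have L1 : Real.log ((p + q) / p) = Real.log (p + q) - Real.log p :=
    Real.log_div (by positivity) hp.ne'
  have L2 : Real.log ((p + q) / q) = Real.log (p + q) - Real.log q :=
    Real.log_div (by positivity) hq.ne'
  have L3 : Real.log (1 + 1 / w) = Real.log (1 + w) - Real.log w := by
    rw [show 1 + 1 / w = (1 + w) / w by field_simp; ring]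
    exact Real.log_div hw1.ne' hw.ne'
  have L4 : Real.log a = Real.log (p + q) - Real.log p - Real.log (1 + w) := by
    rw [ha_def, Real.log_div (by positivity) (by positivity),
      Real.log_mul hp.ne' hw1.ne']
    ring
  have L5 : Real.log b = Real.log (p + q) + Real.log w - Real.log q - Real.log (1 + w) := by
    rw [hb_def, Real.log_div (by positivity) (by positivity),
      Real.log_mul (by positivity) hw.ne', Real.log_mul hq.ne' hw1.ne']
    ring
  have hzero : p * (a - 1) + q * (b - 1) = 0 := by
    rw [ha_def, hb_def]; field_simp; ring
  have hA := (mul_lt_mul_iff_right₀ hp).2 h1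
  have hB := mul_le_mul_of_nonneg_left h2 hq.le
  rw [L4] at hA
  rw [L5] at hB
  rw [L1, L2, L3]
  nlinarith [hA, hB, hzero]

private lemma ptwise_eq (p q : ℝ) (hp : 0 < p) (hq : 0 < q) :
    p * Real.log (1 + q / p) + q * Real.log (1 + 1 / (q / p))
      = p * Real.log ((p + q) / p) + q * Real.log ((p + q) / q) := by
  have e1 : 1 + q / p = (p + q) / p := by field_simp
  have e2 : 1 + 1 / (q / p) = (p + q) / q := by
    rw [one_div_div]; field_simp; ring
  rw [e1, e2]

/-- Lemma 1 (minimizer part): for pmfs `P` (full support) and `Q` on a finite type,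
the objective `Σ P·log(1+w) + Σ Q·log(1+1/w)` over positive weight functions `w` is
bounded below by `Σ (P·log((P+Q)/P) + Q·log((P+Q)/Q))` (with the convention that
`Q x · log((P x + Q x)/Q x) = 0` when `Q x = 0`, which holds automatically here since
multiplication by zero gives zero); moreover, if `Q` also has full support, the bound is
attained exactly at `w = Q/P`. -/
theorem joint_importance_objective_min
    {X : Type*} [Fintype X]
    (P Q : X → ℝ)
    (hPpos : ∀ x, 0 < P x) (hPsum : ∑ x, P x = 1)
    (hQnn : ∀ x, 0 ≤ Q x) (hQsum : ∑ x, Q x = 1) :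
    (∀ w : X → ℝ, (∀ x, 0 < w x) →
      ∑ x, (P x * Real.log ((P x + Q x) / P x) + Q x * Real.log ((P x + Q x) / Q x))
        ≤ (∑ x, P x * Real.log (1 + w x)) + ∑ x, Q x * Real.log (1 + 1 / w x)) ∧
    ((∀ x, 0 < Q x) → ∀ w : X → ℝ, (∀ x, 0 < w x) →
      ((∑ x, P x * Real.log (1 + w x)) + (∑ x, Q x * Real.log (1 + 1 / w x))
          = ∑ x, (P x * Real.log ((P x + Q x) / P x) + Q x * Real.log ((P x + Q x) / Q x))
        ↔ ∀ x, w x = Q x / P x)) := by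
  constructor
  · intro w hw
    rw [← Finset.sum_add_distrib]
    exact Finset.sum_le_sum fun x _ => ptwise_le (P x) (Q x) (w x) (hPpos x) (hQnn x) (hw x)
  · intro hQpos w hw
    constructor
    · intro heq
      by_contra hne
      push_neg at hne
      obtain ⟨x0, hx0⟩ := hne
      have hlt : ∑ x, (P x * Real.log ((P x + Q x) / P x) + Q x * Real.log ((P x + Q x) / Q x))
          < (∑ x, P x * Real.log (1 + w x)) + ∑ x, Q x * Real.log (1 + 1 / w x) := by
        rw [← Finset.sum_add_distrib]
        exact Finset.sum_lt_sum
          (fun i _ => ptwise_le (P i) (Q i) (w i) (hPpos i) (hQnn i) (hw i))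
          ⟨x0, Finset.mem_univ x0,
            ptwise_lt (P x0) (Q x0) (w x0) (hPpos x0) (hQpos x0) (hw x0) hx0⟩
      linarith
    · intro hwq
      rw [← Finset.sum_add_distrib]
      refine Finset.sum_congr rfl fun x _ => ?_
      rw [hwq x]
      exact ptwise_eq (P x) (Q x) (hPpos x) (hQpos x)
end

section
/- (Lemma 1, optimal value part.) Let X be a finite type and let P and Q be probability mass functions on X with P(x) > 0 and Q(x) > 0 for every x. Then Σ_x [ P(x)·log(1 + Q(x)/P(x)) + Q(x)·log(1 + P(x)/Q(x)) ] = 2·( log 2 − ( H(M) − (H(P) + H(Q))/2 ) ), where M(x) = (P(x) + Q(x))/2 and H(R) = −Σ_x R(x)·log R(x) is the Shannon entropy. Equivalently, the optimal value of the objective in Lemma 1 equals 2(log 2 − JSD(P‖Q)), where JSD(P‖Q) = H((P+Q)/2) − (H(P) + H(Q))/2 is the Jensen–Shannon divergence. -/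
/-- Lemma 1 (optimal value part): at the minimizer `w = Q/P`, the objective equals
`2(log 2 − JSD(P‖Q))`, where `JSD(P‖Q) = H((P+Q)/2) − (H(P) + H(Q))/2` and
`H(R) = −Σ R·log R` is the Shannon entropy. -/
theorem joint_importance_objective_value
    {X : Type*} [Fintype X]
    (P Q : X → ℝ)
    (hPpos : ∀ x, 0 < P x) (hPsum : ∑ x, P x = 1)
    (hQpos : ∀ x, 0 < Q x) (hQsum : ∑ x, Q x = 1) :
    ∑ x, (P x * Real.log (1 + Q x / P x) + Q x * Real.log (1 + P x / Q x))
      = 2 * (Real.log 2 -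
          ((-∑ x, ((P x + Q x) / 2) * Real.log ((P x + Q x) / 2))
            - ((-∑ x, P x * Real.log (P x)) + (-∑ x, Q x * Real.log (Q x))) / 2)) := by
  have hL : ∀ x, P x * Real.log (1 + Q x / P x) + Q x * Real.log (1 + P x / Q x)
      = (P x + Q x) * Real.log (P x + Q x) - P x * Real.log (P x) - Q x * Real.log (Q x) := by
    intro x
    have hp := hPpos x
    have hq := hQpos x
    have hpq : 0 < P x + Q x := by linarith
    have h1 : 1 + Q x / P x = (P x + Q x) / P x := by field_simp
    have h2 : 1 + P x / Q x = (P x + Q x) / Q x := by field_simp; ring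
    rw [h1, h2, Real.log_div hpq.ne' hp.ne', Real.log_div hpq.ne' hq.ne']
    ring
  have hM : ∀ x, ((P x + Q x) / 2) * Real.log ((P x + Q x) / 2)
      = ((P x + Q x) * Real.log (P x + Q x) - (P x + Q x) * Real.log 2) / 2 := by
    intro x
    have hpq : 0 < P x + Q x := by linarith [hPpos x, hQpos x]
    rw [Real.log_div hpq.ne' (by norm_num)]
    ring
  simp_rw [hL, hM]
  rw [Finset.sum_sub_distrib, Finset.sum_sub_distrib, ← Finset.sum_div, Finset.sum_sub_distrib,
    ← Finset.sum_mul, Finset.sum_add_distrib, hPsum, hQsum]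
  ring
end

section
/- (Proposition 1: correctness of the supervised objective.) Let X and Y be finite types and let p_S and p_T be probability mass functions on X × Y with equal supports (p_S(x,y) > 0 if and only if p_T(x,y) > 0), satisfying factorizable joint shift: there exist U₀ : X → ℝ≥0 and V₀ : Y → ℝ≥0 with p_T(x,y) = U₀(x)·V₀(y)·p_S(x,y) for all (x,y). For functions U : X → ℝ with U > 0 and V : Y → ℝ with V > 0, define L_sup(U, V) = Σ_{x,y} p_S(x,y)·log(1 + U(x)V(y)) + Σ_{x,y} p_T(x,y)·log(1 + 1/(U(x)V(y))). Then a pair (U, V) of positive functions attains the minimum of L_sup over all pairs of positive functions if and only if U(x)·V(y) = p_T(x,y)/p_S(x,y) (= U₀(x)·V₀(y)) for every (x,y) with p_S(x,y) > 0. -/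
/-!
Under factorizable joint shift with equal supports, every point of the support of `p_S` has
`U₀ x ≠ 0` and `V₀ y ≠ 0`, so after replacing the zeros of `U₀` and `V₀` by `1` the true
importance `p_T / p_S` is itself of the form `U(x) V(y)` with `U, V > 0`. The objective is a sum of
per-point losses `a log (1 + w) + b log (1 + 1/w)`, and for `a, b > 0` this loss has `w = b / a` as
its unique minimiser over `w > 0` (Gibbs' inequality for the two-point distributions
`(1, w) / (1 + w)` and `(a, b) / (a + b)`). A pair attains the minimum of the sum iff it attains the
minimum of each term on the support, hence iff `U(x) V(y) = p_T / p_S` there.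
-/

open Real

noncomputable section

/-- The logistic density-ratio loss at one point, with source mass `a` and target mass `b`. -/
def ratioLoss (a b w : ℝ) : ℝ :=
  a * log (1 + w) + b * log (1 + 1 / w)

theorem ratioLoss_eq {a b w : ℝ} (hw : 0 < w) :
    ratioLoss a b w = (a + b) * log (1 + w) - b * log w := by
  have h1w : 1 + 1 / w = (1 + w) / w := by field_simp; ring
  rw [ratioLoss, h1w, log_div (by positivity) hw.ne']
  ring

theorem ratioLoss_div_lt {a b w : ℝ} (ha : 0 < a) (hb : 0 < b) (hw : 0 < w) (hne : w ≠ b / a) :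
    ratioLoss a b (b / a) < ratioLoss a b w := by
  obtain ⟨r, hr, rfl⟩ : ∃ r, 0 < r ∧ b = a * r := ⟨b / a, div_pos hb ha, by field_simp⟩
  rw [mul_div_cancel_left₀ _ ha.ne'] at hne ⊢
  set t := (1 + r) / (1 + w) with ht_def
  have ht : t ≠ 1 := by
    rw [ht_def, Ne, div_eq_one_iff_eq (by positivity)]
    intro h
    exact hne (by linarith)
  have hlog₁ : log t < t - 1 := log_lt_sub_one_of_pos (by positivity) ht
  have hlog₂ : log (w / r * t) ≤ w / r * t - 1 := log_le_sub_one_of_pos (by positivity)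
  -- `a t + a r (w / r) t = a (1 + r)`: the two `log ≤ id - 1` bounds add up to zero.
  have hbalance : a * (t - 1) + a * r * (w / r * t - 1) = 0 := by
    rw [ht_def]; field_simp; ring
  rw [log_mul (by positivity) (by positivity), log_div hw.ne' hr.ne'] at hlog₂
  rw [ht_def, log_div (by positivity) (by positivity)] at hlog₁ hlog₂
  rw [ratioLoss_eq hr, ratioLoss_eq hw]
  linarith [mul_lt_mul_of_pos_left hlog₁ ha, mul_le_mul_of_nonneg_left hlog₂ (mul_pos ha hr).le]

theorem ratioLoss_div_le {a b w : ℝ} (ha : 0 < a) (hb : 0 < b) (hw : 0 < w) :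
    ratioLoss a b (b / a) ≤ ratioLoss a b w := by
  rcases eq_or_ne w (b / a) with rfl | hne
  · exact le_rfl
  · exact (ratioLoss_div_lt ha hb hw hne).le

/-- The paper's `L_sup` on a finite index type, where `w (x, y) = U x * V y`. -/
def ratioObjective {ι : Type*} [Fintype ι] (a b w : ι → ℝ) : ℝ :=
  ∑ i, a i * log (1 + w i) + ∑ i, b i * log (1 + 1 / w i)

section Objective

variable {ι : Type*} {a b : ι → ℝ}

theorem ratioObjective_eq_sum [Fintype ι] (w : ι → ℝ) :
    ratioObjective a b w = ∑ i, ratioLoss (a i) (b i) (w i) :=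
  Finset.sum_add_distrib.symm

variable (ha : ∀ i, 0 ≤ a i) (hab : ∀ i, 0 < a i → 0 < b i) (hb : ∀ i, a i = 0 → b i = 0)
include ha hab hb

theorem ratioLoss_le_of_eq_div_on_support {w₀ w : ι → ℝ}
    (hw₀ : ∀ i, 0 < a i → w₀ i = b i / a i) (hw : ∀ i, 0 < w i) (i : ι) :
    ratioLoss (a i) (b i) (w₀ i) ≤ ratioLoss (a i) (b i) (w i) := by
  rcases (ha i).eq_or_lt with hai | hai
  · simp [ratioLoss, ← hai, hb i hai.symm]
  · rw [hw₀ i hai]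
    exact ratioLoss_div_le hai (hab i hai) (hw i)

variable [Fintype ι]

theorem ratioObjective_le_of_eq_div_on_support {w₀ w : ι → ℝ}
    (hw₀ : ∀ i, 0 < a i → w₀ i = b i / a i) (hw : ∀ i, 0 < w i) :
    ratioObjective a b w₀ ≤ ratioObjective a b w := by
  rw [ratioObjective_eq_sum, ratioObjective_eq_sum]
  exact Finset.sum_le_sum fun i _ ↦ ratioLoss_le_of_eq_div_on_support ha hab hb hw₀ hw i

theorem eq_div_on_support_of_ratioObjective_le {w₀ w : ι → ℝ}
    (hw₀ : ∀ i, 0 < a i → w₀ i = b i / a i) (hw : ∀ i, 0 < w i)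
    (hle : ratioObjective a b w ≤ ratioObjective a b w₀) :
    ∀ i, 0 < a i → w i = b i / a i := by
  have htermwise := ratioLoss_le_of_eq_div_on_support ha hab hb hw₀ hw
  have hsum : ∑ i, ratioLoss (a i) (b i) (w₀ i) = ∑ i, ratioLoss (a i) (b i) (w i) := by
    rw [← ratioObjective_eq_sum, ← ratioObjective_eq_sum]
    exact (ratioObjective_le_of_eq_div_on_support ha hab hb hw₀ hw).antisymm hle
  have hterm := (Finset.sum_eq_sum_iff_of_le fun i _ ↦ htermwise i).mp hsum
  intro i hai
  by_contra hne
  have hlt := ratioLoss_div_lt hai (hab i hai) (hw i) hne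
  rw [← hw₀ i hai, hterm i (Finset.mem_univ i)] at hlt
  exact lt_irrefl _ hlt

end Objective

theorem NNReal.exists_pos_eq_of_ne_zero {α : Type*} (f : α → NNReal) :
    ∃ g : α → ℝ, (∀ x, 0 < g x) ∧ ∀ x, f x ≠ 0 → g x = f x := by
  refine ⟨fun x ↦ if f x = 0 then 1 else f x, fun x ↦ ?_, fun x hx ↦ if_neg hx⟩
  dsimp only
  split_ifs with h
  · exact one_pos
  · exact NNReal.coe_pos.mpr (pos_iff_ne_zero.mpr h)

theorem supervised_objective_correctness_general
    {X Y : Type*} [Fintype X] [Fintype Y]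
    (pS pT : X × Y → ℝ)
    (hSnn : ∀ xy, 0 ≤ pS xy)
    (hsupp : ∀ xy : X × Y, 0 < pS xy ↔ 0 < pT xy)
    (hFJS : ∃ U₀ : X → NNReal, ∃ V₀ : Y → NNReal,
      ∀ x y, pT (x, y) = (U₀ x : ℝ) * (V₀ y : ℝ) * pS (x, y))
    (U : X → ℝ) (V : Y → ℝ) (hU : ∀ x, 0 < U x) (hV : ∀ y, 0 < V y) :
    (∀ (U' : X → ℝ) (V' : Y → ℝ), (∀ x, 0 < U' x) → (∀ y, 0 < V' y) →
        (∑ xy : X × Y, pS xy * Real.log (1 + U xy.1 * V xy.2))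
            + (∑ xy : X × Y, pT xy * Real.log (1 + 1 / (U xy.1 * V xy.2)))
          ≤ (∑ xy : X × Y, pS xy * Real.log (1 + U' xy.1 * V' xy.2))
            + (∑ xy : X × Y, pT xy * Real.log (1 + 1 / (U' xy.1 * V' xy.2))))
      ↔ ∀ (x : X) (y : Y), 0 < pS (x, y) → U x * V y = pT (x, y) / pS (x, y) := by
  obtain ⟨U₀, V₀, hUV⟩ := hFJS
  have hT : ∀ xy, pS xy = 0 → pT xy = 0 := fun ⟨x, y⟩ h ↦ by simp [hUV, h]
  have hST : ∀ xy, 0 < pS xy → 0 < pT xy := fun xy ↦ (hsupp xy).mp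
  obtain ⟨U₁, hU₁, hU₁_eq⟩ := NNReal.exists_pos_eq_of_ne_zero U₀
  obtain ⟨V₁, hV₁, hV₁_eq⟩ := NNReal.exists_pos_eq_of_ne_zero V₀
  have hratio : ∀ xy : X × Y, 0 < pS xy → U₁ xy.1 * V₁ xy.2 = pT xy / pS xy := by
    rintro ⟨x, y⟩ hxy
    have hprod : (U₀ x : ℝ) * V₀ y ≠ 0 := fun h ↦ by simpa [hUV, h] using hST _ hxy
    rw [hU₁_eq x (by exact_mod_cast left_ne_zero_of_mul hprod),
      hV₁_eq y (by exact_mod_cast right_ne_zero_of_mul hprod), hUV, mul_div_cancel_right₀ _ hxy.ne']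
  constructor
  · intro hmin x y hxy
    exact eq_div_on_support_of_ratioObjective_le hSnn hST hT hratio
      (fun xy ↦ mul_pos (hU xy.1) (hV xy.2)) (hmin U₁ V₁ hU₁ hV₁) (x, y) hxy
  · intro hopt U' V' hU' hV'
    exact ratioObjective_le_of_eq_div_on_support hSnn hST hT (fun xy ↦ hopt xy.1 xy.2)
      (fun xy ↦ mul_pos (hU' xy.1) (hV' xy.2))

/-- Proposition 1 (correctness of the supervised objective): under factorizable joint
shift with equal supports, a pair of positive factors `(U, V)` minimizes the supervised
objective `L_sup` over all pairs of positive functions if and only if `U(x)·V(y)` equals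
the true joint importance `p_T(x,y)/p_S(x,y)` on the support of `p_S`. -/
theorem supervised_objective_correctness
    {X Y : Type*} [Fintype X] [Fintype Y]
    (pS pT : X × Y → ℝ)
    (hSnn : ∀ xy, 0 ≤ pS xy) (hSsum : ∑ xy : X × Y, pS xy = 1)
    (hTnn : ∀ xy, 0 ≤ pT xy) (hTsum : ∑ xy : X × Y, pT xy = 1)
    (hsupp : ∀ xy : X × Y, 0 < pS xy ↔ 0 < pT xy)
    (hFJS : ∃ U₀ : X → NNReal, ∃ V₀ : Y → NNReal,
      ∀ x y, pT (x, y) = (U₀ x : ℝ) * (V₀ y : ℝ) * pS (x, y))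
    (U : X → ℝ) (V : Y → ℝ) (hU : ∀ x, 0 < U x) (hV : ∀ y, 0 < V y) :
    (∀ (U' : X → ℝ) (V' : Y → ℝ), (∀ x, 0 < U' x) → (∀ y, 0 < V' y) →
        (∑ xy : X × Y, pS xy * Real.log (1 + U xy.1 * V xy.2))
            + (∑ xy : X × Y, pT xy * Real.log (1 + 1 / (U xy.1 * V xy.2)))
          ≤ (∑ xy : X × Y, pS xy * Real.log (1 + U' xy.1 * V' xy.2))
            + (∑ xy : X × Y, pT xy * Real.log (1 + 1 / (U' xy.1 * V' xy.2))))
      ↔ ∀ (x : X) (y : Y), 0 < pS (x, y) → U x * V y = pT (x, y) / pS (x, y) :=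
  supervised_objective_correctness_general pS pT hSnn hsupp hFJS U V hU hV
end
end

section
/- (Proposition 2: correctness of the unsupervised objective.) Let X and Y be finite types and let p_S and p_T be probability mass functions on X × Y whose X-marginals have equal support (p_S_X(x) > 0 if and only if p_T_X(x) > 0), with p_S_X(x) = Σ_y p_S(x,y) and p_T_X(x) = Σ_y p_T(x,y). For positive functions U : X → ℝ and V : Y → ℝ, define Ṽ(x) = Σ_y (p_S(x,y)/p_S_X(x))·V(y) for x with p_S_X(x) > 0, and define L_unsup(U, V) = Σ_x p_S_X(x)·log(1 + U(x)·Ṽ(x)) + Σ_x p_T_X(x)·log(1 + 1/(U(x)·Ṽ(x))), where sums range over x with p_S_X(x) > 0. Then a pair (U, V) of positive functions attains the minimum of L_unsup over all pairs of positive functions if and only if for every x with p_S_X(x) > 0, Σ_y p_S(x,y)·U(x)·V(y) = p_T_X(x). -/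
open Finset

lemma amgm_log {p q s : ℝ} (hp : 0 < p) (hq : 0 < q) (hpq : p + q = 1)
    (hs : 0 < s) : q * Real.log s ≤ Real.log (p + q * s) := by
  have hm : 0 < p + q * s := by positivity
  have h1 : Real.log (s / (p + q * s)) ≤ s / (p + q * s) - 1 :=
    Real.log_le_sub_one_of_pos (by positivity)
  have h2 : Real.log (1 / (p + q * s)) ≤ 1 / (p + q * s) - 1 :=
    Real.log_le_sub_one_of_pos (by positivity)
  rw [Real.log_div (ne_of_gt hs) (ne_of_gt hm)] at h1
  rw [Real.log_div one_ne_zero (ne_of_gt hm), Real.log_one] at h2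
  have key : q * (s / (p + q * s) - 1) + p * (1 / (p + q * s) - 1) = 0 := by
    field_simp
    linear_combination (-(p + q * s)) * hpq
  have e : q * Real.log (p + q * s) + p * Real.log (p + q * s) = Real.log (p + q * s) := by
    linear_combination Real.log (p + q * s) * hpq
  nlinarith [mul_le_mul_of_nonneg_left h1 hq.le, mul_le_mul_of_nonneg_left h2 hp.le]

lemma amgm_log_lt {p q s : ℝ} (hp : 0 < p) (hq : 0 < q) (hpq : p + q = 1)
    (hs : 0 < s) (hs1 : s ≠ 1) : q * Real.log s < Real.log (p + q * s) := by
  have hm : 0 < p + q * s := by positivity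
  have key : q * (s / (p + q * s) - 1) + p * (1 / (p + q * s) - 1) = 0 := by
    field_simp
    linear_combination (-(p + q * s)) * hpq
  have e : q * Real.log (p + q * s) + p * Real.log (p + q * s) = Real.log (p + q * s) := by
    linear_combination Real.log (p + q * s) * hpq
  by_cases hmeq : p + q * s = 1
  · have hsm : s / (p + q * s) ≠ 1 := by rw [hmeq]; simpa using hs1
    have h1 : Real.log (s / (p + q * s)) < s / (p + q * s) - 1 :=
      Real.log_lt_sub_one_of_pos (by positivity) hsm
    have h2 : Real.log (1 / (p + q * s)) ≤ 1 / (p + q * s) - 1 :=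
      Real.log_le_sub_one_of_pos (by positivity)
    rw [Real.log_div (ne_of_gt hs) (ne_of_gt hm)] at h1
    rw [Real.log_div one_ne_zero (ne_of_gt hm), Real.log_one] at h2
    nlinarith [mul_lt_mul_of_pos_left h1 hq, mul_le_mul_of_nonneg_left h2 hp.le]
  · have hsm : 1 / (p + q * s) ≠ 1 := by
      intro h; apply hmeq; field_simp at h; linarith
    have h1 : Real.log (s / (p + q * s)) ≤ s / (p + q * s) - 1 :=
      Real.log_le_sub_one_of_pos (by positivity)
    have h2 : Real.log (1 / (p + q * s)) < 1 / (p + q * s) - 1 :=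
      Real.log_lt_sub_one_of_pos (by positivity) hsm
    rw [Real.log_div (ne_of_gt hs) (ne_of_gt hm)] at h1
    rw [Real.log_div one_ne_zero (ne_of_gt hm), Real.log_one] at h2
    nlinarith [mul_le_mul_of_nonneg_left h1 hq.le, mul_lt_mul_of_pos_left h2 hp]

lemma fmin {a b t : ℝ} (ha : 0 < a) (hb : 0 < b) (ht : 0 < t) :
    a * Real.log (1 + b / a) + b * Real.log (1 + 1 / (b / a)) ≤
      a * Real.log (1 + t) + b * Real.log (1 + 1 / t) := by
  have hab : 0 < a + b := by linarith
  have hamgm := amgm_log (p := a / (a + b)) (q := b / (a + b)) (s := a * t / b)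
    (by positivity) (by positivity) (by field_simp) (by positivity)
  have hmrw : a / (a + b) + b / (a + b) * (a * t / b) = a * (1 + t) / (a + b) := by
    field_simp
  rw [hmrw] at hamgm
  have e1 : Real.log (a * t / b) = Real.log a + Real.log t - Real.log b := by
    rw [Real.log_div (by positivity) hb.ne', Real.log_mul ha.ne' ht.ne']
  have e2 : Real.log (a * (1 + t) / (a + b)) =
      Real.log a + Real.log (1 + t) - Real.log (a + b) := by
    rw [Real.log_div (by positivity) hab.ne', Real.log_mul ha.ne' (by positivity)]
  rw [e1, e2] at hamgm
  have e3 : (1 : ℝ) + b / a = (a + b) / a := by field_simp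
  have e4 : (1 : ℝ) + 1 / (b / a) = (a + b) / b := by field_simp; ring
  have e7 : (1 : ℝ) + 1 / t = (1 + t) / t := by field_simp; ring
  rw [e3, e4, e7, Real.log_div hab.ne' ha.ne', Real.log_div hab.ne' hb.ne',
    Real.log_div (by positivity : (1:ℝ)+t ≠ 0) ht.ne']
  have h := mul_le_mul_of_nonneg_left hamgm hab.le
  have hbb : (a + b) * (b / (a + b) * (Real.log a + Real.log t - Real.log b)) =
      b * (Real.log a + Real.log t - Real.log b) := by field_simp
  rw [hbb] at h
  linarith

lemma fmin_lt {a b t : ℝ} (ha : 0 < a) (hb : 0 < b) (ht : 0 < t)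
    (hne : t ≠ b / a) :
    a * Real.log (1 + b / a) + b * Real.log (1 + 1 / (b / a)) <
      a * Real.log (1 + t) + b * Real.log (1 + 1 / t) := by
  have hab : 0 < a + b := by linarith
  have hs1 : a * t / b ≠ 1 := by
    intro h; apply hne; field_simp at h ⊢; linarith [h]
  have hamgm := amgm_log_lt (p := a / (a + b)) (q := b / (a + b)) (s := a * t / b)
    (by positivity) (by positivity) (by field_simp) (by positivity) hs1
  have hmrw : a / (a + b) + b / (a + b) * (a * t / b) = a * (1 + t) / (a + b) := by
    field_simp
  rw [hmrw] at hamgm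
  have e1 : Real.log (a * t / b) = Real.log a + Real.log t - Real.log b := by
    rw [Real.log_div (by positivity) hb.ne', Real.log_mul ha.ne' ht.ne']
  have e2 : Real.log (a * (1 + t) / (a + b)) =
      Real.log a + Real.log (1 + t) - Real.log (a + b) := by
    rw [Real.log_div (by positivity) hab.ne', Real.log_mul ha.ne' (by positivity)]
  rw [e1, e2] at hamgm
  have e3 : (1 : ℝ) + b / a = (a + b) / a := by field_simp
  have e4 : (1 : ℝ) + 1 / (b / a) = (a + b) / b := by field_simp; ring
  have e7 : (1 : ℝ) + 1 / t = (1 + t) / t := by field_simp; ring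
  rw [e3, e4, e7, Real.log_div hab.ne' ha.ne', Real.log_div hab.ne' hb.ne',
    Real.log_div (by positivity : (1:ℝ)+t ≠ 0) ht.ne']
  have h := mul_lt_mul_of_pos_left hamgm hab
  have hbb : (a + b) * (b / (a + b) * (Real.log a + Real.log t - Real.log b)) =
      b * (Real.log a + Real.log t - Real.log b) := by field_simp
  rw [hbb] at h
  linarith

/-- Proposition 2 (correctness of the unsupervised objective): when the `X`-marginals of
source and target have equal support, a pair of positive factors `(U, V)` minimizes the
unsupervised objective `L_unsup` (where `Ṽ(x) = Σ_y (p_S(x,y)/p_S_X(x))·V(y)` and the sums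
range over `x` with `p_S_X(x) > 0`) over all pairs of positive functions if and only if
the reweighted source data marginal matches the target data marginal:
`Σ_y p_S(x,y)·U(x)·V(y) = p_T_X(x)` for all `x` with `p_S_X(x) > 0`. -/
theorem unsupervised_objective_correctness
    {X Y : Type*} [Fintype X] [Fintype Y]
    (pS pT : X × Y → ℝ)
    (hSnn : ∀ xy, 0 ≤ pS xy) (hSsum : ∑ xy : X × Y, pS xy = 1)
    (hTnn : ∀ xy, 0 ≤ pT xy) (hTsum : ∑ xy : X × Y, pT xy = 1)
    (hsupp : ∀ x : X, 0 < ∑ y : Y, pS (x, y) ↔ 0 < ∑ y : Y, pT (x, y))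
    (U : X → ℝ) (V : Y → ℝ) (hU : ∀ x, 0 < U x) (hV : ∀ y, 0 < V y) :
    (∀ (U' : X → ℝ) (V' : Y → ℝ), (∀ x, 0 < U' x) → (∀ y, 0 < V' y) →
        ((∑ x ∈ univ.filter (fun x => 0 < ∑ y : Y, pS (x, y)),
            (∑ y : Y, pS (x, y)) *
              Real.log (1 + U x * ∑ y : Y, (pS (x, y) / ∑ y' : Y, pS (x, y')) * V y))
          + ∑ x ∈ univ.filter (fun x => 0 < ∑ y : Y, pS (x, y)),
            (∑ y : Y, pT (x, y)) *
              Real.log (1 + 1 /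
                (U x * ∑ y : Y, (pS (x, y) / ∑ y' : Y, pS (x, y')) * V y)))
        ≤ ((∑ x ∈ univ.filter (fun x => 0 < ∑ y : Y, pS (x, y)),
            (∑ y : Y, pS (x, y)) *
              Real.log (1 + U' x * ∑ y : Y, (pS (x, y) / ∑ y' : Y, pS (x, y')) * V' y))
          + ∑ x ∈ univ.filter (fun x => 0 < ∑ y : Y, pS (x, y)),
            (∑ y : Y, pT (x, y)) *
              Real.log (1 + 1 /
                (U' x * ∑ y : Y, (pS (x, y) / ∑ y' : Y, pS (x, y')) * V' y))))
      ↔ ∀ x : X, 0 < ∑ y : Y, pS (x, y) →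
          ∑ y : Y, pS (x, y) * (U x * V y) = ∑ y : Y, pT (x, y) := by
  classical
  set S := univ.filter (fun x : X => 0 < ∑ y : Y, pS (x, y)) with hSdef
  have haS : ∀ x ∈ S, 0 < ∑ y : Y, pS (x, y) := fun x hx => (mem_filter.mp hx).2
  have hbS : ∀ x ∈ S, 0 < ∑ y : Y, pT (x, y) := fun x hx => (hsupp x).mp (haS x hx)
  -- positivity of the conditional expectation of any positive V'
  have hVt : ∀ (V' : Y → ℝ), (∀ y, 0 < V' y) → ∀ x : X, 0 < ∑ y : Y, pS (x, y) →
      0 < ∑ y : Y, (pS (x, y) / ∑ y' : Y, pS (x, y')) * V' y := by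
    intro V' hV' x hx
    have h0 : ∑ y : Y, (0:ℝ) < ∑ y : Y, pS (x, y) := by simpa using hx
    obtain ⟨y₀, -, hy₀⟩ := Finset.exists_lt_of_sum_lt h0
    refine Finset.sum_pos' (fun y _ => mul_nonneg (div_nonneg (hSnn _) hx.le) (hV' y).le)
      ⟨y₀, mem_univ _, mul_pos (div_pos hy₀ hx) (hV' y₀)⟩
  -- key algebraic identity
  have hkey : ∀ (U' : X → ℝ) (V' : Y → ℝ) (x : X), 0 < ∑ y : Y, pS (x, y) →
      (∑ y : Y, pS (x, y)) *
          (U' x * ∑ y : Y, (pS (x, y) / ∑ y' : Y, pS (x, y')) * V' y)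
        = ∑ y : Y, pS (x, y) * (U' x * V' y) := by
    intro U' V' x hx
    have h1 : ∑ y : Y, (pS (x, y) / ∑ y' : Y, pS (x, y')) * V' y
        = (∑ y : Y, pS (x, y) * V' y) / ∑ y' : Y, pS (x, y') := by
      rw [Finset.sum_div]
      exact Finset.sum_congr rfl fun y _ => by rw [div_mul_eq_mul_div]
    have h2 : ∑ y : Y, pS (x, y) * (U' x * V' y) = U' x * ∑ y : Y, pS (x, y) * V' y := by
      rw [Finset.mul_sum]
      exact Finset.sum_congr rfl fun y _ => by ring
    rw [h1, h2]
    field_simp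
  constructor
  · -- minimality implies matching
    intro hmin x₀ hx₀
    have hb₀ : 0 < ∑ y : Y, pT (x₀, y) := (hsupp x₀).mp hx₀
    have hVt₀ : 0 < ∑ y : Y, (pS (x₀, y) / ∑ y' : Y, pS (x₀, y')) * V y :=
      hVt V hV x₀ hx₀
    set c : ℝ := ((∑ y : Y, pT (x₀, y)) / ∑ y : Y, pS (x₀, y)) /
      (∑ y : Y, (pS (x₀, y) / ∑ y' : Y, pS (x₀, y')) * V y) with hcdef
    have hc : 0 < c := by positivity
    set U'' : X → ℝ := fun x => if x = x₀ then c else U x with hU''def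
    have hU''pos : ∀ x, 0 < U'' x := by
      intro x
      simp only [hU''def]
      split_ifs
      · exact hc
      · exact hU x
    have hm := hmin U'' V hU''pos hV
    have hx₀S : x₀ ∈ S := mem_filter.mpr ⟨mem_univ _, hx₀⟩
    -- split the sums at x₀
    rw [← Finset.add_sum_erase S _ hx₀S, ← Finset.add_sum_erase S _ hx₀S,
      ← Finset.add_sum_erase S _ hx₀S, ← Finset.add_sum_erase S _ hx₀S] at hm
    have hUeq : ∀ x ∈ S.erase x₀, U'' x = U x := by
      intro x hx
      have : x ≠ x₀ := (Finset.mem_erase.mp hx).1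
      simp [hU''def, this]
    have he1 : ∑ x ∈ S.erase x₀,
        (∑ y : Y, pS (x, y)) *
          Real.log (1 + U'' x * ∑ y : Y, (pS (x, y) / ∑ y' : Y, pS (x, y')) * V y)
        = ∑ x ∈ S.erase x₀,
        (∑ y : Y, pS (x, y)) *
          Real.log (1 + U x * ∑ y : Y, (pS (x, y) / ∑ y' : Y, pS (x, y')) * V y) :=
      Finset.sum_congr rfl fun x hx => by rw [hUeq x hx]
    have he2 : ∑ x ∈ S.erase x₀,
        (∑ y : Y, pT (x, y)) *
          Real.log (1 + 1 / (U'' x * ∑ y : Y, (pS (x, y) / ∑ y' : Y, pS (x, y')) * V y))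
        = ∑ x ∈ S.erase x₀,
        (∑ y : Y, pT (x, y)) *
          Real.log (1 + 1 / (U x * ∑ y : Y, (pS (x, y) / ∑ y' : Y, pS (x, y')) * V y)) :=
      Finset.sum_congr rfl fun x hx => by rw [hUeq x hx]
    rw [he1, he2] at hm
    have hUx₀ : U'' x₀ = c := by simp [hU''def]
    rw [hUx₀] at hm
    have hcc : c * ∑ y : Y, (pS (x₀, y) / ∑ y' : Y, pS (x₀, y')) * V y
        = (∑ y : Y, pT (x₀, y)) / ∑ y : Y, pS (x₀, y) := by
      rw [hcdef]; exact div_mul_cancel₀ _ (ne_of_gt hVt₀)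
    rw [hcc] at hm
    have hpt : (∑ y : Y, pS (x₀, y)) *
          Real.log (1 + U x₀ * ∑ y : Y, (pS (x₀, y) / ∑ y' : Y, pS (x₀, y')) * V y)
        + (∑ y : Y, pT (x₀, y)) *
          Real.log (1 + 1 / (U x₀ * ∑ y : Y, (pS (x₀, y) / ∑ y' : Y, pS (x₀, y')) * V y))
        ≤ (∑ y : Y, pS (x₀, y)) *
          Real.log (1 + (∑ y : Y, pT (x₀, y)) / ∑ y : Y, pS (x₀, y))
        + (∑ y : Y, pT (x₀, y)) *
          Real.log (1 + 1 / ((∑ y : Y, pT (x₀, y)) / ∑ y : Y, pS (x₀, y))) := by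
      linarith
    have htpos : 0 < U x₀ * ∑ y : Y, (pS (x₀, y) / ∑ y' : Y, pS (x₀, y')) * V y :=
      mul_pos (hU x₀) hVt₀
    have hteq : U x₀ * ∑ y : Y, (pS (x₀, y) / ∑ y' : Y, pS (x₀, y')) * V y
        = (∑ y : Y, pT (x₀, y)) / ∑ y : Y, pS (x₀, y) := by
      by_contra hne
      exact absurd hpt (not_le.mpr (fmin_lt hx₀ hb₀ htpos hne))
    have := hkey U V x₀ hx₀
    rw [hteq] at this
    rw [← this, mul_comm, div_mul_cancel₀ _ (ne_of_gt hx₀)]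
  · -- matching implies minimality
    intro hcond U' V' hU' hV'
    rw [← Finset.sum_add_distrib, ← Finset.sum_add_distrib]
    refine Finset.sum_le_sum fun x hx => ?_
    have hax := haS x hx
    have hbx := hbS x hx
    have hVtx' : 0 < ∑ y : Y, (pS (x, y) / ∑ y' : Y, pS (x, y')) * V' y :=
      hVt V' hV' x hax
    have ht : U x * ∑ y : Y, (pS (x, y) / ∑ y' : Y, pS (x, y')) * V y
        = (∑ y : Y, pT (x, y)) / ∑ y : Y, pS (x, y) := by
      have h1 := hkey U V x hax
      have h2 := hcond x hax
      rw [eq_div_iff hax.ne']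
      rw [h2] at h1
      linear_combination h1
    rw [ht]
    exact fmin hax hbx (mul_pos (hU' x) hVtx')
end

section
/- (The toy example lies beyond Generalized Label Shift: general form.) Let X, Y, Z be finite types and let p_S and p_T be probability mass functions on X × Y such that p_S_X(x) = Σ_y p_S(x,y) > 0 for every x ∈ X, and the source conditional label distributions are pairwise distinct: for all x₁ ≠ x₂ there exists y with p_S(x₁,y)/p_S_X(x₁) ≠ p_S(x₂,y)/p_S_X(x₂). Suppose there exist x₀ ∈ X and y₀ ∈ Y with p_S_Y(y₀) = Σ_x p_S(x,y₀) > 0 and p_T_Y(y₀) = Σ_x p_T(x,y₀) > 0 such that p_S(x₀,y₀)/p_S_Y(y₀) ≠ p_T(x₀,y₀)/p_T_Y(y₀) (i.e., the conditional of X given Y differs between the domains). Then for every g : X → Z that preserves all label information in the source domain (for all x, y: p_S(x,y)/p_S_X(x) = (Σ_{x' : g(x') = g(x)} p_S(x',y)) / (Σ_{x' : g(x') = g(x)} p_S_X(x'))), there exist z ∈ Z and y ∈ Y with p_S_Y(y) > 0 and p_T_Y(y) > 0 such that (Σ_{x : g(x) = z} p_S(x,y)) / p_S_Y(y) ≠ (Σ_{x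 : g(x) = z} p_T(x,y)) / p_T_Y(y); that is, generalized label shift fails for g. -/
open Finset

/-- General form of "the toy example lies beyond generalized label shift": if the source
conditional label distributions are pairwise distinct and the conditional of `X` given
`Y` differs between the domains at some `(x₀, y₀)`, then no feature map `g` that preserves
all label information in the source domain can make the conditional distribution of
`g(X)` given `Y` the same in both domains. -/
theorem toy_example_beyond_GLS
    {X Y Z : Type*} [Fintype X] [Fintype Y] [Fintype Z] [DecidableEq Z]
    (pS pT : X × Y → ℝ)
    (hSnn : ∀ xy, 0 ≤ pS xy) (hSsum : ∑ xy : X × Y, pS xy = 1)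
    (hTnn : ∀ xy, 0 ≤ pT xy) (hTsum : ∑ xy : X × Y, pT xy = 1)
    (hpos : ∀ x : X, 0 < ∑ y : Y, pS (x, y))
    (hdistinct : ∀ x₁ x₂ : X, x₁ ≠ x₂ → ∃ y : Y,
      pS (x₁, y) / (∑ y' : Y, pS (x₁, y')) ≠ pS (x₂, y) / (∑ y' : Y, pS (x₂, y')))
    (x₀ : X) (y₀ : Y)
    (hSy₀ : 0 < ∑ x : X, pS (x, y₀)) (hTy₀ : 0 < ∑ x : X, pT (x, y₀))
    (hdiff : pS (x₀, y₀) / (∑ x : X, pS (x, y₀)) ≠ pT (x₀, y₀) / (∑ x : X, pT (x, y₀))) :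
    ∀ g : X → Z,
      (∀ (x : X) (y : Y),
        pS (x, y) / (∑ y' : Y, pS (x, y')) =
          (∑ x' ∈ univ.filter (fun x' => g x' = g x), pS (x', y)) /
            (∑ x' ∈ univ.filter (fun x' => g x' = g x), ∑ y' : Y, pS (x', y'))) →
      ∃ (z : Z) (y : Y), 0 < ∑ x : X, pS (x, y) ∧ 0 < ∑ x : X, pT (x, y) ∧
        (∑ x ∈ univ.filter (fun x => g x = z), pS (x, y)) / (∑ x : X, pS (x, y)) ≠
          (∑ x ∈ univ.filter (fun x => g x = z), pT (x, y)) / (∑ x : X, pT (x, y)) := by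
  intro g hg
  -- g is injective
  have hinj : Function.Injective g := by
    intro x₁ x₂ hx
    by_contra hne
    obtain ⟨y, hy⟩ := hdistinct x₁ x₂ hne
    apply hy
    have h1 := hg x₁ y
    have h2 := hg x₂ y
    rw [h1, h2, hx]
  refine ⟨g x₀, y₀, hSy₀, hTy₀, ?_⟩
  have hfilter : univ.filter (fun x => g x = g x₀) = {x₀} := by
    ext x
    simp only [mem_filter, mem_univ, true_and, mem_singleton]
    exact ⟨fun h => hinj h, fun h => by rw [h]⟩
  rw [hfilter, sum_singleton, sum_singleton]
  exact hdiff
end
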